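/- arXiv:2402.06144 — 7 statements merged into one kernel-verified Lean document; each statement's English description precedes it below -/
import Mathlib

section
/- Let Γ be a group acting by homeomorphisms on a nonempty perfect compact metric space (M, d), and let D > 0 be a pair-separation constant for the action. Then for every ε with 0 < ε < D/5 and every conical limit point z ∈ M, there exist α ∈ Γ and open sets V ⊆ W ⊆ M, both containing z, such that: (1) diam(W) ≤ ε; (2) diam(α⁻¹·W) > 4ε; and (3) the closure of N_{2ε}(α⁻¹·V) is contained in α⁻¹·W. (Abstract form of Lemma 3.1, 'Expanded neighborhoods'.) -/
open Metric Filter Topology Pointwise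

/-!
Compose the conical sequence `gᵢ` of `z` with an element `h` separating its two limit
points `a ≠ b`: the maps `fᵢ = h gᵢ` then push `z` towards `b' = h • b` and everything outside
a small ball `W` around `z` towards `a' = h • a`, where `dist a' b' > D > 5ε`. For large `i`,
the image `fᵢ • W` contains `fᵢ • z` near `b'` and `fᵢ • w` near `a'` for some `w ≠ z` in `W`
(the space is perfect), so it has diameter `> 4ε`; and with `V = W ∩ fᵢ⁻¹(ball b' ε)` the
closed `2ε`-neighbourhood of `fᵢ • V` lies in `closedBall b' 3ε`, which misses
`fᵢ • Wᶜ ⊆ ball a' ε`. Take `α = fᵢ⁻¹`.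
-/

theorem ContinuousAt.comp_tendstoUniformlyOn_const {ι α β γ : Type*} [UniformSpace β]
    [UniformSpace γ] {F : ι → α → β} {p : Filter ι} {s : Set α} {c : β} {φ : β → γ}
    (hφ : ContinuousAt φ c) (h : TendstoUniformlyOn F (fun _ => c) p s) :
    TendstoUniformlyOn (fun i x => φ (F i x)) (fun _ => φ c) p s :=
  tendsto_prod_principal_iff.mp (hφ.tendsto.comp (tendsto_prod_principal_iff.mpr h))

theorem Metric.closure_thickening_subset_of_subset_ball {X : Type*} [PseudoMetricSpace X]
    {S T : Set X} {a b : X} {r s δ : ℝ} (hS : S ⊆ ball b r) (hT : Tᶜ ⊆ ball a s)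
    (hab : r + δ + s ≤ dist a b) : closure (thickening δ S) ⊆ T := by
  intro x hx
  by_contra hxT
  have hxb : dist x b ≤ δ + r :=
    closure_ball_subset_closedBall
      (closure_mono ((thickening_subset_of_subset δ hS).trans (thickening_ball b δ r)) hx)
  have hxa : dist x a < s := hT hxT
  linarith [dist_triangle_left a b x]

section Conical

variable {Γ M : Type*} [Group Γ] [UniformSpace M] [MulAction Γ M]

def IsConicalSeq (g : ℕ → Γ) (z a b : M) : Prop :=
  Tendsto (fun i => g i • z) atTop (𝓝 b) ∧
    ∀ K : Set M, IsCompact K → K ⊆ {z}ᶜ →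
      TendstoUniformlyOn (fun i x => g i • x) (fun _ => a) atTop K

namespace IsConicalSeq

variable {g : ℕ → Γ} {z a b : M}

theorem smul_left [ContinuousConstSMul Γ M] (hg : IsConicalSeq g z a b) (h : Γ) :
    IsConicalSeq (fun i => h * g i) z (h • a) (h • b) := by
  simp only [IsConicalSeq, mul_smul]
  exact ⟨((continuous_const_smul h).tendsto b).comp hg.1, fun K hK hKz =>
    (continuous_const_smul h).continuousAt.comp_tendstoUniformlyOn_const (hg.2 K hK hKz)⟩

theorem tendsto_smul_of_ne (hg : IsConicalSeq g z a b) {w : M} (hw : w ≠ z) :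
    Tendsto (fun i => g i • w) atTop (𝓝 a) :=
  (hg.2 {w} isCompact_singleton (Set.singleton_subset_iff.mpr hw)).tendsto_at rfl

theorem eventually_smul_compl_subset [CompactSpace M] (hg : IsConicalSeq g z a b)
    {W U : Set M} (hW : IsOpen W) (hzW : z ∈ W) (hU : U ∈ 𝓝 a) :
    ∀ᶠ i in atTop, g i • Wᶜ ⊆ U := by
  have hWz : Wᶜ ⊆ {z}ᶜ := Set.compl_subset_compl.mpr (Set.singleton_subset_iff.mpr hzW)
  have := tendsto_prod_principal_iff.mpr (hg.2 Wᶜ hW.isClosed_compl.isCompact hWz) hU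
  exact (eventually_prod_principal_iff.mp this).mono fun i hi =>
    Set.smul_set_subset_iff.mpr fun x hx => hi x hx

end IsConicalSeq

end Conical

theorem expanded_neighborhoods_general
    {Γ M : Type*} [Group Γ] [MetricSpace M] [CompactSpace M]
    [MulAction Γ M] [ContinuousConstSMul Γ M]
    (hperfect : ∀ x : M, (𝓝[≠] x).NeBot)
    (D : ℝ)
    (hsep : ∀ x y : M, x ≠ y → ∃ g : Γ, D < dist (g • x) (g • y))
    (ε : ℝ) (hε0 : 0 < ε) (hεD : ε < D / 5)
    (z : M)
    (hconical : ∃ a b : M, a ≠ b ∧ ∃ g : ℕ → Γ,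
      Tendsto (fun i => g i • z) atTop (𝓝 b) ∧
      ∀ K : Set M, IsCompact K → K ⊆ {z}ᶜ →
        TendstoUniformlyOn (fun i x => g i • x) (fun _ => a) atTop K) :
    ∃ (α : Γ) (V W : Set M), IsOpen V ∧ IsOpen W ∧ z ∈ V ∧ z ∈ W ∧ V ⊆ W ∧
      diam W ≤ ε ∧ 4 * ε < diam (α⁻¹ • W) ∧
      closure (thickening (2 * ε) (α⁻¹ • V)) ⊆ α⁻¹ • W := by
  obtain ⟨a, b, hab, g, hgz, hgK⟩ := hconical
  obtain ⟨h, hsep_ab⟩ := hsep a b hab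
  have hg : IsConicalSeq (fun i => h * g i) z (h • a) (h • b) :=
    IsConicalSeq.smul_left ⟨hgz, hgK⟩ h
  have hfar : 4 * ε < dist (h • a) (h • b) := by linarith
  have hzW : z ∈ ball z (ε / 2) := mem_ball_self (by positivity)
  obtain ⟨w, hwW, hwz⟩ : (ball z (ε / 2) \ {z}).Nonempty :=
    (hperfect z).nonempty_of_mem (sdiff_mem_nhdsWithin_compl (ball_mem_nhds z (by positivity)) _)
  have hz_near := hg.1.eventually (ball_mem_nhds _ hε0)
  have hwz_far := ((hg.tendsto_smul_of_ne hwz).dist hg.1).eventually_const_lt hfar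
  have hWc_near := hg.eventually_smul_compl_subset isOpen_ball hzW (ball_mem_nhds _ hε0)
  obtain ⟨i, hzb, hwzi, hWc⟩ := (hz_near.and (hwz_far.and hWc_near)).exists
  refine ⟨(h * g i)⁻¹, ball z (ε / 2) ∩ ((h * g i) • ·) ⁻¹' ball (h • b) ε, ball z (ε / 2),
    isOpen_ball.inter (isOpen_ball.preimage (continuous_const_smul _)), isOpen_ball,
    ⟨hzW, hzb⟩, hzW, Set.inter_subset_left, (diam_ball (by positivity)).trans (by linarith),
    ?_, ?_⟩ <;> rw [inv_inv]
  · exact hwzi.trans_le (dist_le_diam_of_mem isBounded_of_compactSpace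
      (Set.smul_mem_smul_set hwW) (Set.smul_mem_smul_set hzW))
  · refine closure_thickening_subset_of_subset_ball (a := h • a) (s := ε)
      (Set.smul_set_subset_iff.mpr fun x hx => hx.2) ?_ (by linarith)
    rwa [← Set.smul_set_compl]

/-- Abstract form of Lemma 3.1 ('Expanded neighborhoods'): a group Γ acting by
homeomorphisms on a nonempty perfect compact metric space with pair-separation
constant `D` admits expanded neighborhoods around every conical limit point. -/
theorem expanded_neighborhoods
    {Γ M : Type*} [Group Γ] [MetricSpace M] [CompactSpace M] [Nonempty M]
    [MulAction Γ M] [ContinuousConstSMul Γ M]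
    (hperfect : ∀ x : M, (𝓝[≠] x).NeBot)
    (D : ℝ) (hD : 0 < D)
    (hsep : ∀ x y : M, x ≠ y → ∃ g : Γ, D < dist (g • x) (g • y))
    (ε : ℝ) (hε0 : 0 < ε) (hεD : ε < D / 5)
    (z : M)
    (hconical : ∃ a b : M, a ≠ b ∧ ∃ g : ℕ → Γ,
      Tendsto (fun i => g i • z) atTop (𝓝 b) ∧
      ∀ K : Set M, IsCompact K → K ⊆ {z}ᶜ →
        TendstoUniformlyOn (fun i x => g i • x) (fun _ => a) atTop K) :
    ∃ (α : Γ) (V W : Set M), IsOpen V ∧ IsOpen W ∧ z ∈ V ∧ z ∈ W ∧ V ⊆ W ∧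
      diam W ≤ ε ∧ 4 * ε < diam (α⁻¹ • W) ∧
      closure (thickening (2 * ε) (α⁻¹ • V)) ⊆ α⁻¹ • W :=
  expanded_neighborhoods_general hperfect D hsep ε hε0 hεD z hconical
end

section
/- Let Γ be a group acting by homeomorphisms on a compact metric space (M, d). Let p ∈ M, let Γ_p = {h ∈ Γ : h·p = p} be its stabilizer, and assume Γ_p acts properly discontinuously on M ∖ {p}. Suppose K ⊆ M ∖ {p} is a compact set with Γ_p·K = M ∖ {p}, and D_Π > 0 satisfies D_Π < diam(K) and d(x, p) > D_Π for every x ∈ K. Then for every ε with 0 < ε < D_Π/5 and every g ∈ Γ, writing q = g·p, there exist open sets V̂ ⊆ Ŵ ⊆ M ∖ {p} and a finite subset F of the left coset gΓ_p = {g·h : h ∈ Γ_p} such that: (1) diam(Ŵ) > 4ε; (2) the closure of N_{2ε}(V̂) is contained in Ŵ; (3) p does not lie in the closure of N_ε(Ŵ); (4) the set V(q) := {q} ∪ ⋃_{α ∈ gΓ_p ∖ F} α·V̂ is a neighborhood of q; (5) the set W(q) := {q} ∪ ⋃_{α ∈ gΓ_p ∖ F} α·Ŵ contains V(q); and (6)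 diam(W(q)) ≤ ε. (Abstract form of Lemma 3.2, 'Parabolic points'.) -/
/-!
Take `V̂ = N_{ε/2}(K)` and `Ŵ = N_{3ε}(K)`; the metric conditions hold because `K` stays more
than `5ε` away from `p`. For `g • Γ_p` one may work with `Γ_p` and translate by `g`. Near `p`,
every point lies in some `h • K` with `h ∈ Γ_p`, and only finitely many of the closed sets
`h • closure K` are excluded, so `V(p)` is a neighbourhood of `p`. Proper discontinuity, applied
to the compact set `closure Ŵ ∪ Uᶜ`, shows that all but finitely many `h • Ŵ` lie inside any given
neighbourhood `U` of `p`; taking `U = g⁻¹ • B_{ε/2}(g • p)` makes `W(g • p)` small.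
-/

open Metric Filter Topology Pointwise MulAction

section Thickening

variable {M : Type*} [MetricSpace M]

theorem notMem_thickening_of_le_dist {K : Set M} {p : M} {r : ℝ}
    (hK : ∀ x ∈ K, r ≤ dist x p) : p ∉ thickening r K := fun hp => by
  obtain ⟨z, hz, hpz⟩ := mem_thickening_iff.1 hp
  exact (hK z hz).not_gt (dist_comm z p ▸ hpz)

theorem closure_thickening_thickening_subset_thickening {δ ε r : ℝ} (hδ : 0 ≤ δ) (hε : 0 ≤ ε)
    (hr : δ + ε < r) (s : Set M) : closure (thickening δ (thickening ε s)) ⊆ thickening r s :=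
  calc closure (thickening δ (thickening ε s)) ⊆ cthickening δ (thickening ε s) :=
        closure_thickening_subset_cthickening δ _
    _ ⊆ cthickening (δ + ε) s := cthickening_thickening_subset hδ ε s
    _ ⊆ thickening r s := cthickening_subset_thickening' (by linarith) hr s

end Thickening

section Action

variable {Γ M : Type*} [Group Γ] [MulAction Γ M]

/-- The set `V(p)` (or `W(p)`) of the paper, with `S = V̂` (or `Ŵ`) and `F` the excluded
elements of the stabilizer. -/
def parabolicNbhd (p : M) (S : Set M) (F : Set Γ) : Set M :=
  insert p (⋃ h ∈ (stabilizer Γ p : Set Γ) \ F, h • S)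

theorem parabolicNbhd_mono {p : M} {S T : Set M} (hST : S ⊆ T) (F : Set Γ) :
    parabolicNbhd p S F ⊆ parabolicNbhd p T F :=
  Set.insert_subset_insert (Set.iUnion₂_mono fun _ _ => Set.smul_set_mono hST)

theorem smul_parabolicNbhd (g : Γ) (p : M) (S : Set M) (F : Set Γ) :
    g • parabolicNbhd p S F = insert (g • p)
      (⋃ α ∈ {γ : Γ | ∃ h : Γ, h • p = p ∧ γ = g * h} \ (g * ·) '' F, α • S) := by
  ext x
  simp [parabolicNbhd, Set.smul_set_insert, Set.smul_set_iUnion₂, mul_smul]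

theorem parabolicNbhd_setOf_not_smul_subset {p : M} {S U : Set M} (hpU : p ∈ U) :
    parabolicNbhd p S {h : Γ | h • p = p ∧ ¬h • S ⊆ U} ⊆ U :=
  Set.insert_subset hpU <|
    Set.iUnion₂_subset fun _ ⟨hp, hbad⟩ => not_not.1 fun hSU => hbad ⟨hp, hSU⟩

theorem parabolicNbhd_mem_nhds [TopologicalSpace M] [ContinuousConstSMul Γ M]
    {p : M} {K S : Set M} {F : Set Γ}
    (hcover : ∀ x : M, x ≠ p → ∃ h : Γ, h • p = p ∧ x ∈ h • K) (hpK : p ∉ closure K)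
    (hKS : K ⊆ S) (hF : F.Finite) (hFp : F ⊆ stabilizer Γ p) :
    parabolicNbhd p S F ∈ 𝓝 p := by
  set C := ⋃ h ∈ F, h • closure K
  have hC : IsClosed C := hF.isClosed_biUnion fun h _ => isClosed_closure.smul h
  have hpC : p ∉ C := by
    simp only [C, Set.mem_iUnion]
    rintro ⟨h, hF, hp⟩
    rw [← mem_stabilizer_iff.1 (hFp hF)] at hp
    exact hpK (Set.smul_mem_smul_set_iff.1 hp)
  refine mem_of_superset (hC.isOpen_compl.mem_nhds hpC) fun y hyC => ?_
  obtain rfl | hyp := eq_or_ne y p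
  · exact Set.mem_insert y _
  obtain ⟨h, hhp, hyK⟩ := hcover y hyp
  have hhF : h ∉ F := fun hF => hyC (Set.mem_biUnion hF (Set.smul_set_mono subset_closure hyK))
  exact Or.inr (Set.mem_biUnion ⟨hhp, hhF⟩ (Set.smul_set_mono hKS hyK))

theorem finite_setOf_not_smul_subset [TopologicalSpace M] [CompactSpace M] {p : M}
    (hpd : ∀ L : Set M, IsCompact L → L ⊆ {p}ᶜ →
      {h : Γ | h • p = p ∧ ((h • L) ∩ L).Nonempty}.Finite)
    {L U : Set M} (hpL : p ∉ closure L) (hU : U ∈ 𝓝 p) :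
    {h : Γ | h • p = p ∧ ¬h • L ⊆ U}.Finite := by
  set L' := closure L ∪ (interior U)ᶜ
  have hL'p : L' ⊆ {p}ᶜ := by
    rintro x (hx | hx) rfl
    exacts [hpL hx, hx (mem_interior_iff_mem_nhds.2 hU)]
  refine (hpd L' (isClosed_closure.union isOpen_interior.isClosed_compl).isCompact hL'p).subset ?_
  rintro h ⟨hp, hLU⟩
  obtain ⟨x, hxL, hxU⟩ := Set.not_subset.1 hLU
  exact ⟨hp, x, Set.smul_set_mono (subset_closure.trans Set.subset_union_left) hxL,
    Or.inr fun hx => hxU (interior_subset hx)⟩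

end Action

theorem parabolic_points_general
    {Γ M : Type*} [Group Γ] [MetricSpace M] [CompactSpace M]
    [MulAction Γ M] [ContinuousConstSMul Γ M]
    (p : M)
    (hpd : ∀ L : Set M, IsCompact L → L ⊆ {p}ᶜ →
      {h : Γ | h • p = p ∧ ((h • L) ∩ L).Nonempty}.Finite)
    (K : Set M)
    (hKcover : ∀ x : M, x ≠ p → ∃ h : Γ, h • p = p ∧ x ∈ h • K)
    (Dpi : ℝ) (hDpidiam : Dpi < diam K)
    (hDpidist : ∀ x ∈ K, Dpi < dist x p)
    (ε : ℝ) (hε0 : 0 < ε) (hεD : ε < Dpi / 5) (g : Γ) :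
    ∃ (Vh Wh : Set M) (F : Set Γ),
      F.Finite ∧ F ⊆ {γ : Γ | ∃ h : Γ, h • p = p ∧ γ = g * h} ∧
      IsOpen Vh ∧ IsOpen Wh ∧ Vh ⊆ Wh ∧ Wh ⊆ {p}ᶜ ∧
      4 * ε < diam Wh ∧
      closure (thickening (2 * ε) Vh) ⊆ Wh ∧
      p ∉ closure (thickening ε Wh) ∧
      ∃ Vq Wq : Set M,
        Vq = insert (g • p)
          (⋃ α ∈ {γ : Γ | ∃ h : Γ, h • p = p ∧ γ = g * h} \ F, α • Vh) ∧
        Wq = insert (g • p)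
          (⋃ α ∈ {γ : Γ | ∃ h : Γ, h • p = p ∧ γ = g * h} \ F, α • Wh) ∧
        Vq ∈ 𝓝 (g • p) ∧ Vq ⊆ Wq ∧ diam Wq ≤ ε := by
  set Vh := thickening (ε / 2) K
  set Wh := thickening (3 * ε) K
  have hKV : K ⊆ Vh := self_subset_thickening (by positivity) K
  have hVW : Vh ⊆ Wh := thickening_mono (by linarith) K
  have hpW : p ∉ closure (thickening ε Wh) := fun hp =>
    notMem_thickening_of_le_dist (fun x hx => (hDpidist x hx).le) <|
      closure_thickening_thickening_subset_thickening hε0.le (by positivity) (by linarith) K hp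
  have hWW : Wh ⊆ closure (thickening ε Wh) := (self_subset_thickening hε0 Wh).trans subset_closure
  have hpWcl : p ∉ closure Wh := fun hp => hpW (closure_minimal hWW isClosed_closure hp)
  set U := g⁻¹ • ball (g • p) (ε / 2)
  have hU : U ∈ 𝓝 p := by
    simpa using (smul_mem_nhds_smul_iff g⁻¹).2 (ball_mem_nhds (g • p) (by positivity : 0 < ε / 2))
  set F := {h : Γ | h • p = p ∧ ¬h • Wh ⊆ U}
  have hWq : g • parabolicNbhd p Wh F ⊆ ball (g • p) (ε / 2) :=
    Set.smul_set_subset_iff_subset_inv_smul_set.2 <| parabolicNbhd_setOf_not_smul_subset <|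
      Set.mem_inv_smul_set_iff.2 (mem_ball_self (by positivity))
  have hF : F.Finite := finite_setOf_not_smul_subset hpd hpWcl hU
  refine ⟨Vh, Wh, (g * ·) '' F, hF.image _, fun _ ⟨h, hh, hα⟩ => ⟨h, hh.1, hα.symm⟩,
    isOpen_thickening, isOpen_thickening, hVW, fun x hx hxp => hpW (hxp ▸ hWW hx), ?_,
    closure_thickening_thickening_subset_thickening (by positivity) (by positivity) (by linarith) K,
    hpW, g • parabolicNbhd p Vh F, g • parabolicNbhd p Wh F, smul_parabolicNbhd ..,
    smul_parabolicNbhd .., ?_, Set.smul_set_mono (parabolicNbhd_mono hVW F), ?_⟩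
  · linarith [diam_mono (hKV.trans hVW) isBounded_of_compactSpace]
  · exact (smul_mem_nhds_smul_iff g).2 <|
      parabolicNbhd_mem_nhds hKcover (fun hp => hpWcl (closure_mono (hKV.trans hVW) hp)) hKV hF
        fun _ hh => hh.1
  · linarith [diam_mono hWq isBounded_ball, diam_ball (x := g • p) (by positivity : 0 ≤ ε / 2)]

/-- Abstract form of Lemma 3.2 ('Parabolic points'): around each translate `q = g • p`
of a bounded parabolic point `p` there are adapted neighborhoods built from a
fundamental compact set `K` for the stabilizer of `p`. -/
theorem parabolic_points
    {Γ M : Type*} [Group Γ] [MetricSpace M] [CompactSpace M]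
    [MulAction Γ M] [ContinuousConstSMul Γ M]
    (p : M)
    (hpd : ∀ L : Set M, IsCompact L → L ⊆ {p}ᶜ →
      {h : Γ | h • p = p ∧ ((h • L) ∩ L).Nonempty}.Finite)
    (K : Set M) (hK : IsCompact K) (hKp : K ⊆ {p}ᶜ)
    (hKcover : ∀ x : M, x ≠ p → ∃ h : Γ, h • p = p ∧ x ∈ h • K)
    (Dpi : ℝ) (hDpi : 0 < Dpi) (hDpidiam : Dpi < diam K)
    (hDpidist : ∀ x ∈ K, Dpi < dist x p)
    (ε : ℝ) (hε0 : 0 < ε) (hεD : ε < Dpi / 5) (g : Γ) :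
    ∃ (Vh Wh : Set M) (F : Set Γ),
      F.Finite ∧ F ⊆ {γ : Γ | ∃ h : Γ, h • p = p ∧ γ = g * h} ∧
      IsOpen Vh ∧ IsOpen Wh ∧ Vh ⊆ Wh ∧ Wh ⊆ {p}ᶜ ∧
      4 * ε < diam Wh ∧
      closure (thickening (2 * ε) Vh) ⊆ Wh ∧
      p ∉ closure (thickening ε Wh) ∧
      ∃ Vq Wq : Set M,
        Vq = insert (g • p)
          (⋃ α ∈ {γ : Γ | ∃ h : Γ, h • p = p ∧ γ = g * h} \ F, α • Vh) ∧
        Wq = insert (g • p)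
          (⋃ α ∈ {γ : Γ | ∃ h : Γ, h • p = p ∧ γ = g * h} \ F, α • Wh) ∧
        Vq ∈ 𝓝 (g • p) ∧ Vq ⊆ Wq ∧ diam Wq ≤ ε :=
  parabolic_points_general p hpd K hKcover Dpi hDpidiam hDpidist ε hε0 hεD g
end

section
/- Let Γ be a group acting by homeomorphisms on a compact metric space (M, d). Let p ∈ M with stabilizer Γ_p = {h ∈ Γ : h·p = p}, and assume Γ_p acts properly discontinuously on M ∖ {p}. Let g ∈ Γ and q = g·p. Let V̂ ⊆ M be a set whose closure does not contain p, let F be a finite subset of the left coset gΓ_p = {g·h : h ∈ Γ_p}, and set V := {q} ∪ ⋃_{α ∈ gΓ_p ∖ F} α·V̂. Then for every η > 0 there exists r > 0 such that ⋃_{α ∈ gΓ_p ∖ F} α·N_r(V̂) ⊆ N_η(V). (Abstract form of Lemma 3.6, parabolic case.) -/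
open Metric Filter Topology Pointwise

/-!
Fix `δ > 0` so that `g` moves `δ`-close points to `η`-close points, and a closed thickening `K`
of `V̂` missing `p`. Proper discontinuity of `Γ_p` on the compact set `K ∪ (ball p δ)ᶜ` shows
that all but finitely many `h ∈ Γ_p` map `K` into `ball p δ`; for those `g * h` maps the
thickening into the `η`-ball around `q = g • p`. The finitely many remaining `g * h` are
uniformly equicontinuous, which gives `r`.
-/

theorem Set.Finite.exists_pos_forall_dist_smul_lt {Γ M : Type*} [PseudoMetricSpace M]
    [CompactSpace M] [SMul Γ M] [ContinuousConstSMul Γ M] {T : Set Γ} (hT : T.Finite)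
    {ε : ℝ} (hε : 0 < ε) :
    ∃ δ > 0, ∀ γ ∈ T, ∀ x y : M, dist x y < δ → dist (γ • x) (γ • y) < ε := by
  obtain ⟨δ, hδ, h⟩ := Metric.mem_uniformity_dist.1 <| (eventually_all_finite hT).2 fun γ _ =>
    CompactSpace.uniformContinuous_of_continuous (continuous_const_smul γ)
      (dist_mem_uniformity (α := M) hε)
  exact ⟨δ, hδ, fun γ hγ x y hxy => h hxy γ hγ⟩

theorem finite_setOf_smul_eq_and_not_smul_subset {Γ M : Type*} [Group Γ] [TopologicalSpace M]
    [CompactSpace M] [MulAction Γ M] {p : M}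
    (hpd : ∀ L : Set M, IsCompact L → L ⊆ {p}ᶜ →
      {h : Γ | h • p = p ∧ ((h • L) ∩ L).Nonempty}.Finite)
    {K U : Set M} (hK : IsCompact K) (hpK : p ∉ K) (hU : U ∈ 𝓝 p) :
    {h : Γ | h • p = p ∧ ¬ h • K ⊆ U}.Finite := by
  refine (hpd (K ∪ (interior U)ᶜ) (hK.union isOpen_interior.isClosed_compl.isCompact) ?_).subset ?_
  · rintro x (hx | hx) rfl
    exacts [hpK hx, hx (mem_interior_iff_mem_nhds.2 hU)]
  · rintro h ⟨hp, hKU⟩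
    obtain ⟨_, ⟨x, hx, rfl⟩, hxU⟩ := Set.not_subset.1 hKU
    exact ⟨hp, h • x, Set.smul_mem_smul_set (.inl hx), .inr fun hi => hxU (interior_subset hi)⟩

theorem parabolic_nbhds_continuous_general
    {Γ M : Type*} [Group Γ] [MetricSpace M] [CompactSpace M]
    [MulAction Γ M] [ContinuousConstSMul Γ M]
    (p : M)
    (hpd : ∀ L : Set M, IsCompact L → L ⊆ {p}ᶜ →
      {h : Γ | h • p = p ∧ ((h • L) ∩ L).Nonempty}.Finite)
    (g : Γ) (Vh : Set M) (hVh : p ∉ closure Vh)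
    (F : Set Γ)
    (V : Set M)
    (hV : V = insert (g • p)
      (⋃ α ∈ {γ : Γ | ∃ h : Γ, h • p = p ∧ γ = g * h} \ F, α • Vh))
    (η : ℝ) (hη : 0 < η) :
    ∃ r > 0,
      (⋃ α ∈ {γ : Γ | ∃ h : Γ, h • p = p ∧ γ = g * h} \ F, α • thickening r Vh) ⊆
        thickening η V := by
  obtain ⟨ε, hε, hKp⟩ := isClosed_closure.isCompact.exists_cthickening_subset_open
    isOpen_compl_singleton (Set.subset_compl_singleton_iff.2 hVh)
  rw [cthickening_closure] at hKp
  obtain ⟨δ, hδ, hg⟩ := (Set.finite_singleton g).exists_pos_forall_dist_smul_lt (M := M) hη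
  set B := {h : Γ | h • p = p ∧ ¬ h • cthickening ε Vh ⊆ ball p δ}
  have hB : B.Finite := finite_setOf_smul_eq_and_not_smul_subset hpd
    isClosed_cthickening.isCompact (fun hp => hKp hp rfl) (ball_mem_nhds p hδ)
  obtain ⟨δ', hδ', hgB⟩ := (hB.image (g * ·)).exists_pos_forall_dist_smul_lt (M := M) hη
  refine ⟨min ε δ', lt_min hε hδ', ?_⟩
  simp only [Set.iUnion_subset_iff]
  rintro _ ⟨⟨h, hp, rfl⟩, hF⟩ _ ⟨y, hy, rfl⟩
  obtain ⟨z, hz, hyz⟩ := mem_thickening_iff.1 hy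
  by_cases hhB : h ∈ B
  · refine mem_thickening_iff.2 ⟨(g * h) • z, ?_, hgB _ ⟨h, hhB, rfl⟩ y z ?_⟩
    · exact hV ▸ .inr (Set.mem_biUnion ⟨⟨h, hp, rfl⟩, hF⟩ ⟨z, hz, rfl⟩)
    · exact hyz.trans_le (min_le_right _ _)
  · have hyK : y ∈ cthickening ε Vh := thickening_subset_cthickening_of_le (min_le_left _ _) _ hy
    have hhy : dist (h • y) p < δ := not_and_not_right.1 hhB hp (Set.smul_mem_smul_set hyK)
    refine mem_thickening_iff.2 ⟨g • p, hV ▸ Set.mem_insert _ _, ?_⟩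
    simpa only [mul_smul] using hg g rfl _ _ hhy

/-- Abstract form of Lemma 3.6 (parabolic case): the union of translates of a small
thickening of `V̂` over the coset `gΓ_p ∖ F` is contained in the `η`-neighborhood
of `V = {q} ∪ ⋃_{α ∈ gΓ_p ∖ F} α • V̂`. -/
theorem parabolic_nbhds_continuous
    {Γ M : Type*} [Group Γ] [MetricSpace M] [CompactSpace M]
    [MulAction Γ M] [ContinuousConstSMul Γ M]
    (p : M)
    (hpd : ∀ L : Set M, IsCompact L → L ⊆ {p}ᶜ →
      {h : Γ | h • p = p ∧ ((h • L) ∩ L).Nonempty}.Finite)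
    (g : Γ) (Vh : Set M) (hVh : p ∉ closure Vh)
    (F : Set Γ) (hF : F.Finite)
    (hFsub : F ⊆ {γ : Γ | ∃ h : Γ, h • p = p ∧ γ = g * h})
    (V : Set M)
    (hV : V = insert (g • p)
      (⋃ α ∈ {γ : Γ | ∃ h : Γ, h • p = p ∧ γ = g * h} \ F, α • Vh))
    (η : ℝ) (hη : 0 < η) :
    ∃ r > 0,
      (⋃ α ∈ {γ : Γ | ∃ h : Γ, h • p = p ∧ γ = g * h} \ F, α • thickening r Vh) ⊆
        thickening η V :=
  parabolic_nbhds_continuous_general p hpd g Vh hVh F V hV η hη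
end

section
/- Let Γ be a group acting on a set M. Let Z be a finite subset of M, let P ⊆ Z be a distinguished subset of 'parabolic' vertices, and for each z ∈ Z let V(z), V̂(z) ⊆ M and L(z) ⊆ Γ be given. Assume: (a) the sets {V(z)}_{z ∈ Z} cover M; (b) for each z ∈ Z ∖ P, L(z) is a singleton {α_z} and V̂(z) = α_z⁻¹·V(z); (c) for each z ∈ P, V(z) = {z} ∪ ⋃_{α ∈ L(z)} α·V̂(z). Then for every ζ ∈ M there exists z_0 ∈ Z with ζ ∈ V(z_0), and at least one of the following holds: (i) there exist n ≥ 0, elements α_1, …, α_n ∈ Γ and z_1, …, z_n ∈ Z such that for each 1 ≤ k ≤ n one has α_k ∈ L(z_{k−1}), (α_1⋯α_k)⁻¹·ζ ∈ V(z_k), and V̂(z_{k−1}) ∩ V(z_k) ≠ ∅, and moreover z_n ∈ P and ζ = (α_1⋯α_n)·z_n; or (ii) there exist infinite sequences (α_k)_{k≥1} in Γ and (z_k)_{k≥1} in Z such that for every k ≥ 1 one has α_k ∈ L(z_{k−1}), (α_1⋯α_k)⁻¹·ζ ∈ V(z_k), and V̂(z_{k−1}) ∩ V(z_k) ≠ ∅.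 (Abstract form of Lemma 4.4: every point has a strict coding by the automaton.) -/
/-!
Run the automaton on the state `(g, z)`, where `g` is the partial product read so far and
`g⁻¹ • ζ ∈ V z`. Unless `z` is parabolic and `g⁻¹ • ζ = z`, the defining identity of `V z`
provides a letter `α ∈ L z` with `α⁻¹ • g⁻¹ • ζ ∈ Vh z`, and the covering provides the next
vertex. The run either stops at a parabolic vertex, giving a finite coding, or never stops.
-/

open Pointwise

theorem exists_seq_terminal_or_forall_rel {S : Type*} (I T : S → Prop) (R : S → S → Prop)
    (step : ∀ s, I s → ¬T s → ∃ t, I t ∧ R s t) {s₀ : S} (h₀ : I s₀) :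
    ∃ s : ℕ → S, s 0 = s₀ ∧
      ((∃ n, T (s n) ∧ ∀ k < n, R (s k) (s (k + 1))) ∨ ∀ k, R (s k) (s (k + 1))) := by
  classical
  choose! f hfI hfR using step
  -- terminal states are fixed, so the invariant survives them
  set s : ℕ → S := fun k => (fun x => if T x then x else f x)^[k] s₀
  have hsucc : ∀ k, s (k + 1) = if T (s k) then s k else f (s k) := fun k =>
    Function.iterate_succ_apply' _ _ _
  have hI : ∀ k, I (s k) := by
    intro k
    induction k with
    | zero => exact h₀
    | succ k ih =>
      rw [hsucc]
      split_ifs with hT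
      exacts [ih, hfI _ ih hT]
  have hR : ∀ k, ¬T (s k) → R (s k) (s (k + 1)) := fun k hT => by
    rw [hsucc, if_neg hT]
    exact hfR _ (hI k) hT
  refine ⟨s, rfl, ?_⟩
  by_cases hterm : ∃ n, T (s n)
  · exact .inl ⟨Nat.find hterm, Nat.find_spec hterm,
      fun k hk => hR k (Nat.find_min hterm hk)⟩
  · simp only [not_exists] at hterm
    exact .inr fun k => hR k (hterm k)

theorem exists_mem_inv_smul_mem_of_nonterminal {Γ M : Type*} [Group Γ] [MulAction Γ M]
    {Z P : Set M} {V Vh : M → Set M} {L : M → Set Γ}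
    (hconical : ∀ z ∈ Z, z ∉ P → ∃ αz : Γ, L z = {αz} ∧ Vh z = αz⁻¹ • V z)
    (hparabolic : ∀ z ∈ P, V z = insert z (⋃ α ∈ L z, α • Vh z))
    {z x : M} (hz : z ∈ Z) (hx : x ∈ V z) (hterm : z ∈ P → x ≠ z) :
    ∃ α ∈ L z, α⁻¹ • x ∈ Vh z := by
  by_cases hzP : z ∈ P
  · rw [hparabolic z hzP, Set.mem_insert_iff] at hx
    obtain ⟨α, hαL, hαx⟩ := Set.mem_iUnion₂.mp (hx.resolve_left (hterm hzP))
    exact ⟨α, hαL, Set.mem_smul_set_iff_inv_smul_mem.mp hαx⟩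
  · obtain ⟨α, hL, hVh⟩ := hconical z hz hzP
    exact ⟨α, hL ▸ rfl, hVh ▸ Set.smul_mem_smul_set hx⟩

theorem codings_exist_general
    {Γ M : Type*} [Group Γ] [MulAction Γ M]
    (Z P : Finset M)
    (V Vh : M → Set M) (L : M → Set Γ)
    (hcover : ∀ ζ : M, ∃ z ∈ Z, ζ ∈ V z)
    (hconical : ∀ z ∈ Z, z ∉ P → ∃ αz : Γ, L z = {αz} ∧ Vh z = αz⁻¹ • V z)
    (hparabolic : ∀ z ∈ P, V z = insert z (⋃ α ∈ L z, α • Vh z)) :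
    ∀ ζ : M, ∃ z₀ ∈ Z, ζ ∈ V z₀ ∧
      ((∃ (n : ℕ) (α : ℕ → Γ) (zs : ℕ → M) (g : ℕ → Γ),
          zs 0 = z₀ ∧ g 0 = 1 ∧ (∀ k, g (k + 1) = g k * α (k + 1)) ∧
          (∀ k, 1 ≤ k → k ≤ n →
            zs k ∈ Z ∧ α k ∈ L (zs (k - 1)) ∧
            (g k)⁻¹ • ζ ∈ V (zs k) ∧ (Vh (zs (k - 1)) ∩ V (zs k)).Nonempty) ∧
          zs n ∈ P ∧ g n • zs n = ζ) ∨
       (∃ (α : ℕ → Γ) (zs : ℕ → M) (g : ℕ → Γ),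
          zs 0 = z₀ ∧ g 0 = 1 ∧ (∀ k, g (k + 1) = g k * α (k + 1)) ∧
          ∀ k, 1 ≤ k →
            zs k ∈ Z ∧ α k ∈ L (zs (k - 1)) ∧
            (g k)⁻¹ • ζ ∈ V (zs k) ∧ (Vh (zs (k - 1)) ∩ V (zs k)).Nonempty)) := by
  intro ζ
  obtain ⟨z₀, hz₀, hζ⟩ := hcover ζ
  refine ⟨z₀, hz₀, hζ, ?_⟩
  let Inv : Γ × M → Prop := fun p => p.2 ∈ Z ∧ p.1⁻¹ • ζ ∈ V p.2
  let Step : Γ × M → Γ × M → Prop := fun p q =>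
    q.2 ∈ Z ∧ p.1⁻¹ * q.1 ∈ L p.2 ∧ q.1⁻¹ • ζ ∈ V q.2 ∧ (Vh p.2 ∩ V q.2).Nonempty
  have hstep : ∀ p, Inv p → ¬(p.2 ∈ P ∧ p.1⁻¹ • ζ = p.2) → ∃ q, Inv q ∧ Step p q := by
    rintro ⟨g, z⟩ ⟨hz, hx⟩ hterm
    obtain ⟨α, hαL, hαx⟩ := exists_mem_inv_smul_mem_of_nonterminal hconical hparabolic hz hx
      fun hzP => (hterm ⟨hzP, ·⟩)
    obtain ⟨z', hz', hz'x⟩ := hcover (α⁻¹ • g⁻¹ • ζ)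
    rw [← mul_smul, ← mul_inv_rev] at hαx hz'x
    exact ⟨(g * α, z'), ⟨hz', hz'x⟩, hz', by simpa using hαL, hz'x, _, hαx, hz'x⟩
  obtain ⟨s, hs₀, hrun⟩ :=
    exists_seq_terminal_or_forall_rel Inv _ Step hstep (s₀ := (1, z₀)) (by simp [Inv, hz₀, hζ])
  let g k := (s k).1
  let zs k := (s k).2
  let α k := (g (k - 1))⁻¹ * g k
  have hg : ∀ k, g (k + 1) = g k * α (k + 1) := fun k => by simp [α]
  rcases hrun with ⟨n, ⟨hnP, hn⟩, hsteps⟩ | hsteps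
  · refine .inl ⟨n, α, zs, g, by simp [zs, hs₀], by simp [g, hs₀], hg, fun k hk hkn => ?_, hnP,
      by simp only [g, zs, ← hn, smul_inv_smul]⟩
    obtain ⟨j, rfl⟩ := Nat.exists_eq_add_of_le' hk
    exact hsteps j hkn
  · refine .inr ⟨α, zs, g, by simp [zs, hs₀], by simp [g, hs₀], hg, fun k hk => ?_⟩
    obtain ⟨j, rfl⟩ := Nat.exists_eq_add_of_le' hk
    exact hsteps j

/-- Abstract form of Lemma 4.4: every point of `M` has a strict coding by the
automaton, which is either parabolic (a finite coding terminating at a parabolic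
vertex) or conical (an infinite coding). Here `g k` denotes the partial product
`α_1 ⋯ α_k`. -/
theorem codings_exist
    {Γ M : Type*} [Group Γ] [MulAction Γ M]
    (Z P : Finset M) (hPZ : P ⊆ Z)
    (V Vh : M → Set M) (L : M → Set Γ)
    (hcover : ∀ ζ : M, ∃ z ∈ Z, ζ ∈ V z)
    (hconical : ∀ z ∈ Z, z ∉ P → ∃ αz : Γ, L z = {αz} ∧ Vh z = αz⁻¹ • V z)
    (hparabolic : ∀ z ∈ P, V z = insert z (⋃ α ∈ L z, α • Vh z)) :
    ∀ ζ : M, ∃ z₀ ∈ Z, ζ ∈ V z₀ ∧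
      ((∃ (n : ℕ) (α : ℕ → Γ) (zs : ℕ → M) (g : ℕ → Γ),
          zs 0 = z₀ ∧ g 0 = 1 ∧ (∀ k, g (k + 1) = g k * α (k + 1)) ∧
          (∀ k, 1 ≤ k → k ≤ n →
            zs k ∈ Z ∧ α k ∈ L (zs (k - 1)) ∧
            (g k)⁻¹ • ζ ∈ V (zs k) ∧ (Vh (zs (k - 1)) ∩ V (zs k)).Nonempty) ∧
          zs n ∈ P ∧ g n • zs n = ζ) ∨
       (∃ (α : ℕ → Γ) (zs : ℕ → M) (g : ℕ → Γ),
          zs 0 = z₀ ∧ g 0 = 1 ∧ (∀ k, g (k + 1) = g k * α (k + 1)) ∧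
          ∀ k, 1 ≤ k →
            zs k ∈ Z ∧ α k ∈ L (zs (k - 1)) ∧
            (g k)⁻¹ • ζ ∈ V (zs k) ∧ (Vh (zs (k - 1)) ∩ V (zs k)).Nonempty)) :=
  codings_exist_general Z P V Vh L hcover hconical hparabolic
end

section
/- Let Γ be a group acting on a set M, let Z be a finite set, and let W : Z → (subsets of M) be given. Let (z_k)_{k≥0} be a sequence in Z, (α_k)_{k≥1} a sequence in Γ, let g_0 ∈ Γ, and set g_k := g_0·α_1⋯α_k for k ≥ 1. Assume that for every k ≥ 0 the inclusion α_{k+1}·W(z_{k+1}) ⊆ W(z_k) holds and is proper (the two sets are not equal). Then: (1) for every k ≥ 0, g_{k+1}·W(z_{k+1}) is properly contained in g_k·W(z_k); and (2) for every γ ∈ Γ, the set {k ≥ 0 : g_k = γ} has at most |Z| elements. (Lemma 4.8, 'Bounded backtracking I'.) -/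
open Pointwise

/-!
Translating the proper inclusion `α_{k+1} • W(z_{k+1}) ⊂ W(z_k)` by `g_k` gives
`g_{k+1} • W(z_{k+1}) ⊂ g_k • W(z_k)`, so `k ↦ g_k • W(z_k)` is strictly decreasing, hence
injective. Among the indices `k` with `g_k = γ` the labels `z_k` are therefore pairwise distinct,
so there are at most `|Z|` of them.
-/

theorem Set.smul_set_ssubset_smul_set_iff {Γ M : Type*} [Group Γ] [MulAction Γ M] {a : Γ}
    {A B : Set M} : a • A ⊂ a • B ↔ A ⊂ B := by
  simp only [ssubset_iff_subset_not_subset, smul_set_subset_smul_set_iff]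

theorem Set.finite_and_ncard_le_of_injOn {α β : Type*} [Finite β] {s : Set α} {f : α → β}
    (hf : InjOn f s) : s.Finite ∧ s.ncard ≤ Nat.card β :=
  ⟨.of_finite_image (toFinite _) hf,
    ncard_univ β ▸ ncard_le_ncard_of_injOn f (fun _ _ => mem_univ _) hf⟩

theorem injOn_of_injective_smul_set {ι Γ M Z : Type*} [SMul Γ M] {g : ι → Γ} {z : ι → Z}
    {W : Z → Set M} (h : Function.Injective fun k => g k • W (z k)) (γ : Γ) :
    Set.InjOn z {k | g k = γ} := fun a ha b hb hab =>
  h (show g a • W (z a) = g b • W (z b) by rw [ha.out, hb.out, hab])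

/-- Lemma 4.8 ('Bounded backtracking I'): if each `α_{k+1} • W(z_{k+1})` is properly
contained in `W(z_k)`, then the translated sets `g_k • W(z_k)` are properly nested,
and no element of the path sequence `g_k` is repeated more than `|Z|` times. -/
theorem bounded_backtracking_I
    {Γ M Z : Type*} [Group Γ] [MulAction Γ M] [Fintype Z]
    (W : Z → Set M) (z : ℕ → Z) (α : ℕ → Γ) (g : ℕ → Γ)
    (hg : ∀ k : ℕ, g (k + 1) = g k * α (k + 1))
    (hnest : ∀ k : ℕ, α (k + 1) • W (z (k + 1)) ⊂ W (z k)) :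
    (∀ k : ℕ, g (k + 1) • W (z (k + 1)) ⊂ g k • W (z k)) ∧
    (∀ γ : Γ, {k : ℕ | g k = γ}.Finite ∧ {k : ℕ | g k = γ}.ncard ≤ Fintype.card Z) := by
  have hstep : ∀ k, g (k + 1) • W (z (k + 1)) ⊂ g k • W (z k) := fun k => by
    rw [hg k, mul_smul, Set.smul_set_ssubset_smul_set_iff]
    exact hnest k
  have hinj : Function.Injective fun k => g k • W (z k) :=
    (strictAnti_nat_of_succ_lt hstep).injective
  refine ⟨hstep, fun γ => ?_⟩
  rw [← Nat.card_eq_fintype_card]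
  exact Set.finite_and_ncard_le_of_injOn (injOn_of_injective_smul_set hinj γ)
end

section
/- Let G be a group acting by homeomorphisms on a Hausdorff topological space M. For any finite subset F ⊆ G and any finitary point coders Q and Q' for the action, there exists N ∈ ℕ with the following property. Suppose (g₀, c) is a generalized Q'-coding of a point p ∈ M, with path sequence (g_k)_{k≥0} and terminal vertex sequence (z_k)_{k≥1}, and (h₀, d) is a generalized Q-coding of the same point p, with path sequence (h_k)_{k≥0} and terminal vertex sequence (y_k)_{k≥1}. Then for any indices m, n ≥ 1 satisfying g_n⁻¹h_m ∈ F, one has g_{n+N}·(closure of W(z_{n+N})) ⊆ h_m·W(y_m). (Lemma A.3, 'Uniform nesting for finitary point coders'.) -/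
open Pointwise Topology

/-- The partial product `Lab(e 0) * Lab(e 1) * ⋯ * Lab(e (n-1))` of the labels of
the first `n` edges of an edge path `e` (edges indexed from `0`, so `e k`
represents the `(k+1)`-st edge; `pathProd Lab e n = α_1 ⋯ α_n`). -/
def pathProd {E G : Type*} [Monoid G] (Lab : E → G) (e : ℕ → E) (n : ℕ) : G :=
  (List.map (Lab ∘ e) (List.range n)).prod

/-- A finitary point coder for the action of a group `G` on a topological space `M`:
a finite labeled directed graph whose vertices carry open sets, whose edges carry
group-element labels, such that translates along edges nest closures, and every
infinite directed edge path determines a point of `M` via a neighborhood basis. -/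
structure FinitaryPointCoder (G M : Type*) [Group G] [TopologicalSpace M]
    [MulAction G M] where
  V : Type
  E : Type
  finV : Finite V
  finE : Finite E
  ι : E → V
  τ : E → V
  W : V → Set M
  Lab : E → G
  open_W : ∀ v : V, IsOpen (W v)
  nest : ∀ e : E, Lab e • closure (W (τ e)) ⊆ W (ι e)
  codes : ∀ e : ℕ → E, (∀ k : ℕ, τ (e k) = ι (e (k + 1))) →
    ∃ p : M, (∀ n : ℕ, pathProd Lab e (n + 1) • W (τ (e n)) ∈ 𝓝 p) ∧
      ∀ U ∈ 𝓝 p, ∃ n : ℕ, pathProd Lab e (n + 1) • W (τ (e n)) ⊆ U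

/-- `e` is a strict `Q`-coding of `x`: an infinite directed edge path whose
translated vertex sets `(α_1 ⋯ α_n) • W(τ(e_n))` form a neighborhood basis of `x`. -/
def IsStrictCoding {G M : Type*} [Group G] [TopologicalSpace M] [MulAction G M]
    (Q : FinitaryPointCoder G M) (e : ℕ → Q.E) (x : M) : Prop :=
  (∀ k : ℕ, Q.τ (e k) = Q.ι (e (k + 1))) ∧
  (∀ n : ℕ, pathProd Q.Lab e (n + 1) • Q.W (Q.τ (e n)) ∈ 𝓝 x) ∧
  (∀ U ∈ 𝓝 x, ∃ n : ℕ, pathProd Q.Lab e (n + 1) • Q.W (Q.τ (e n)) ⊆ U)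

/-!
Cut the `Q'`-path at the `n`-th edge and translate back by `g₀ * α_1 ⋯ α_n`. The situation is
then determined by the group element `f = g_n⁻¹ h_m ∈ F` and the next `Q`-edge `d_{m+1}`, of
which there are finitely many choices: the coded point lies in the closed set
`f • Lab(d_{m+1}) • closure W(τ d_{m+1})`, which the nesting axiom places inside the open set
`f • W(ι d_{m+1})`. For a single closed `K` inside an open `T`, a compactness argument in the
space of edge paths `ℕ → E` (compact, since `E` is finite) gives a uniform depth beyond which
the cells of any path coding a point of `K` have closure inside `T`: the cell of a path at depth
`N` only depends on its first `N + 1` edges, so "the `N`-th cell misses `K` or has closure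
inside `T`" is an open condition, and every path satisfies it at some depth.
-/

open Filter Set

theorem pathProd_zero {E G : Type*} [Monoid G] (Lab : E → G) (e : ℕ → E) :
    pathProd Lab e 0 = 1 := rfl

theorem pathProd_succ {E G : Type*} [Monoid G] (Lab : E → G) (e : ℕ → E) (n : ℕ) :
    pathProd Lab e (n + 1) = pathProd Lab e n * Lab (e n) :=
  List.prod_range_succ _ n

theorem pathProd_congr {E G : Type*} [Monoid G] (Lab : E → G) {e e' : ℕ → E} {n : ℕ}
    (h : ∀ i < n, e i = e' i) : pathProd Lab e n = pathProd Lab e' n := by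
  unfold pathProd
  congr 1
  exact List.map_congr_left fun i hi => congrArg Lab (h i (List.mem_range.mp hi))

theorem pathProd_add {E G : Type*} [Monoid G] (Lab : E → G) (e : ℕ → E) (n k : ℕ) :
    pathProd Lab e (n + k) = pathProd Lab e n * pathProd Lab (fun j => e (n + j)) k := by
  induction k with
  | zero => simp [pathProd_zero]
  | succ k ih => rw [← add_assoc, pathProd_succ, ih, pathProd_succ, mul_assoc]

namespace FinitaryPointCoder

variable {G M : Type*} [Group G] [TopologicalSpace M] [MulAction G M]
  (Q : FinitaryPointCoder G M)

def IsPath (e : ℕ → Q.E) : Prop :=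
  ∀ k, Q.τ (e k) = Q.ι (e (k + 1))

def cell (e : ℕ → Q.E) (k : ℕ) : Set M :=
  pathProd Q.Lab e (k + 1) • Q.W (Q.τ (e k))

theorem cell_zero (e : ℕ → Q.E) : Q.cell e 0 = Q.Lab (e 0) • Q.W (Q.τ (e 0)) := by
  rw [cell, zero_add, pathProd_succ, pathProd_zero, one_mul]

theorem cell_congr {e e' : ℕ → Q.E} {k : ℕ} (h : ∀ i < k + 1, e i = e' i) :
    Q.cell e k = Q.cell e' k := by
  rw [cell, cell, pathProd_congr Q.Lab h, h k k.lt_succ_self]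

theorem smul_cell_shift (e : ℕ → Q.E) (n k : ℕ) :
    pathProd Q.Lab e n • Q.cell (fun j => e (n + j)) k = Q.cell e (n + k) := by
  rw [cell, cell, smul_smul, ← pathProd_add]
  rfl

theorem cell_shift (e : ℕ → Q.E) (n k : ℕ) :
    Q.cell (fun j => e (n + j)) k = (pathProd Q.Lab e n)⁻¹ • Q.cell e (n + k) :=
  eq_inv_smul_iff.mpr (Q.smul_cell_shift e n k)

theorem isOpen_setOf_cell [TopologicalSpace Q.E] [DiscreteTopology Q.E] (P : Set M → Prop)
    (k : ℕ) : IsOpen {e : ℕ → Q.E | P (Q.cell e k)} := by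
  refine isOpen_iff_forall_mem_open.mpr fun e he => ⟨PiNat.cylinder e (k + 1), ?_,
    PiNat.isOpen_cylinder (fun _ => Q.E) e (k + 1), PiNat.self_mem_cylinder e (k + 1)⟩
  intro e' he'
  show P (Q.cell e' k)
  rwa [Q.cell_congr (PiNat.mem_cylinder_iff.mp he')]

theorem isClosed_setOf_isPath [TopologicalSpace Q.E] [DiscreteTopology Q.E] :
    IsClosed {e : ℕ → Q.E | Q.IsPath e} := by
  simp only [IsPath, ofPred_forall]
  exact isClosed_iInter fun k => IsClosed.preimage (f := fun e : ℕ → Q.E => (e k, e (k + 1)))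
    (by fun_prop) (isClosed_discrete {a : Q.E × Q.E | Q.τ a.1 = Q.ι a.2})

variable [ContinuousConstSMul G M] {Q}

theorem smul_closure_cell (g : G) (e : ℕ → Q.E) (k : ℕ) :
    g • closure (Q.cell e k) = (g * pathProd Q.Lab e (k + 1)) • closure (Q.W (Q.τ (e k))) := by
  rw [cell, closure_smul, mul_smul]

theorem IsPath.closure_cell_succ_subset {e : ℕ → Q.E} (he : Q.IsPath e) (k : ℕ) :
    closure (Q.cell e (k + 1)) ⊆ Q.cell e k := by
  unfold cell
  rw [closure_smul, pathProd_succ, mul_smul, he k]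
  exact smul_set_mono (Q.nest (e (k + 1)))

theorem IsPath.cell_antitone {e : ℕ → Q.E} (he : Q.IsPath e) : Antitone (Q.cell e) :=
  antitone_nat_of_succ_le fun k => subset_closure.trans (he.closure_cell_succ_subset k)

end FinitaryPointCoder

open FinitaryPointCoder

section StrictCoding

variable {G M : Type*} [Group G] [TopologicalSpace M] [MulAction G M]
  {Q : FinitaryPointCoder G M} {e : ℕ → Q.E} {x : M}

theorem IsStrictCoding.isPath (h : IsStrictCoding Q e x) : Q.IsPath e := h.1

theorem IsStrictCoding.cell_mem_nhds (h : IsStrictCoding Q e x) (k : ℕ) : Q.cell e k ∈ 𝓝 x :=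
  h.2.1 k

theorem IsStrictCoding.exists_cell_subset (h : IsStrictCoding Q e x) {U : Set M} (hU : U ∈ 𝓝 x) :
    ∃ k, Q.cell e k ⊆ U :=
  h.2.2 U hU

theorem IsStrictCoding.mem_cell (h : IsStrictCoding Q e x) (k : ℕ) : x ∈ Q.cell e k :=
  mem_of_mem_nhds (h.cell_mem_nhds k)

theorem FinitaryPointCoder.exists_isStrictCoding_of_isPath (h : Q.IsPath e) :
    ∃ x, IsStrictCoding Q e x :=
  let ⟨x, hx⟩ := Q.codes e h
  ⟨x, h, hx⟩

variable [ContinuousConstSMul G M]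

theorem IsStrictCoding.shift (h : IsStrictCoding Q e x) (n : ℕ) :
    IsStrictCoding Q (fun k => e (n + k)) ((pathProd Q.Lab e n)⁻¹ • x) := by
  refine ⟨fun k => h.isPath (n + k), fun k => ?_, fun U hU => ?_⟩
  · change Q.cell _ k ∈ _
    rw [cell_shift, smul_mem_nhds_smul_iff]
    exact h.cell_mem_nhds (n + k)
  · rw [← smul_mem_nhds_smul_iff (pathProd Q.Lab e n), smul_inv_smul] at hU
    obtain ⟨k, hk⟩ := h.exists_cell_subset hU
    refine ⟨k, ?_⟩
    change Q.cell _ k ⊆ U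
    rw [cell_shift, ← subset_smul_set_iff]
    exact (h.isPath.cell_antitone (Nat.le_add_left k n)).trans hk

theorem FinitaryPointCoder.eventually_closure_cell_subset (Q : FinitaryPointCoder G M)
    {K T : Set M} (hK : IsClosed K) (hT : IsOpen T) (hKT : K ⊆ T) :
    ∀ᶠ N in atTop, ∀ (e : ℕ → Q.E) (x : M), IsStrictCoding Q e x → x ∈ K →
      closure (Q.cell e N) ⊆ T := by
  let _ : TopologicalSpace Q.E := ⊥
  have _ : DiscreteTopology Q.E := ⟨rfl⟩
  have := Q.finE
  let paths := {e : ℕ → Q.E | Q.IsPath e}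
  let good : ℕ → Set (ℕ → Q.E) := fun N =>
    {e | Disjoint (Q.cell e N) K ∨ closure (Q.cell e N) ⊆ T} ∪ pathsᶜ
  have good_open (N : ℕ) : IsOpen (good N) :=
    (Q.isOpen_setOf_cell (fun s => Disjoint s K ∨ closure s ⊆ T) N).union
      Q.isClosed_setOf_isPath.isOpen_compl
  have good_mono : Monotone good := by
    rintro N N' hNN' e (he | he)
    · by_cases hpath : Q.IsPath e
      · refine Or.inl (he.imp (Disjoint.mono_left ?_) (subset_trans (closure_mono ?_)))
        <;> exact hpath.cell_antitone hNN'
      · exact Or.inr hpath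
    · exact Or.inr he
  have paths_subset : paths ⊆ ⋃ N, good N := by
    intro e hpath
    obtain ⟨x, hx⟩ := Q.exists_isStrictCoding_of_isPath hpath
    by_cases hxK : x ∈ K
    · obtain ⟨N, hN⟩ := hx.exists_cell_subset (hT.mem_nhds (hKT hxK))
      exact mem_iUnion.mpr ⟨N + 1, Or.inl (Or.inr ((hpath.closure_cell_succ_subset N).trans hN))⟩
    · obtain ⟨N, hN⟩ := hx.exists_cell_subset (hK.isOpen_compl.mem_nhds hxK)
      exact mem_iUnion.mpr ⟨N, Or.inl (Or.inl (subset_compl_iff_disjoint_right.mp hN))⟩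
  obtain ⟨N₀, hN₀⟩ := Q.isClosed_setOf_isPath.isCompact.elim_directed_cover good good_open
    paths_subset good_mono.directed_le
  filter_upwards [eventually_ge_atTop N₀] with N hN e x hx hxK
  rcases good_mono hN (hN₀ hx.isPath) with (hdisj | hsub) | hnotpath
  · exact absurd hxK (hdisj.notMem_of_mem_left (hx.mem_cell N))
  · exact hsub
  · exact absurd hx.isPath hnotpath

end StrictCoding

/-- Here `g_k = g₀ * pathProd Q'.Lab c k` and `z_k = Q'.τ (c (k - 1))` for `k ≥ 1`, and
similarly `h_k`, `y_k` for `(h₀, d)`. -/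
theorem uniform_nesting_for_point_coders_general
    {G M : Type*} [Group G] [TopologicalSpace M]
    [MulAction G M] [ContinuousConstSMul G M]
    (F : Finset G) (Q Q' : FinitaryPointCoder G M) :
    ∃ N : ℕ, ∀ (p x y : M) (g₀ h₀ : G) (c : ℕ → Q'.E) (d : ℕ → Q.E),
      IsStrictCoding Q' c x → g₀ • x = p →
      IsStrictCoding Q d y → h₀ • y = p →
      ∀ m n : ℕ, 1 ≤ m → 1 ≤ n →
        (g₀ * pathProd Q'.Lab c n)⁻¹ * (h₀ * pathProd Q.Lab d m) ∈ F →
        (g₀ * pathProd Q'.Lab c (n + N)) • closure (Q'.W (Q'.τ (c (n + N - 1)))) ⊆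
          (h₀ * pathProd Q.Lab d m) • Q.W (Q.τ (d (m - 1))) := by
  have := Q.finE
  obtain ⟨N, hN⟩ := ((eventually_all_finset F).2 fun f _ => eventually_all.2 fun e' =>
    Q'.eventually_closure_cell_subset ((isClosed_closure.smul (Q.Lab e')).smul f)
      ((Q.open_W (Q.ι e')).smul f) (smul_set_mono (Q.nest e'))).exists
  refine ⟨N + 1, fun p x y g₀ h₀ c d hc hx hd hy m n hm _ hF => ?_⟩
  set f := (g₀ * pathProd Q'.Lab c n)⁻¹ * (h₀ * pathProd Q.Lab d m) with hf
  have hx_shift : (pathProd Q'.Lab c n)⁻¹ • x = f • (pathProd Q.Lab d m)⁻¹ • y := by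
    rw [hf, smul_smul, mul_assoc, mul_inv_cancel_right, mul_inv_rev, mul_assoc, mul_smul, mul_smul,
      hy, ← hx, inv_smul_smul]
  have hy_shift : (pathProd Q.Lab d m)⁻¹ • y ∈ Q.Lab (d m) • closure (Q.W (Q.τ (d m))) := by
    have hy_cell := (hd.shift m).mem_cell 0
    rw [cell_zero] at hy_cell
    exact smul_set_mono subset_closure hy_cell
  have key := smul_set_mono (a := g₀ * pathProd Q'.Lab c n)
    (hN f hF (d m) _ _ (hc.shift n) (hx_shift ▸ smul_mem_smul_set hy_shift))
  rw [mul_smul, ← closure_smul, smul_cell_shift, smul_closure_cell, smul_smul, hf,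
    mul_inv_cancel_left] at key
  rwa [Nat.add_succ_sub_one, ← add_assoc, hd.isPath (m - 1), Nat.sub_add_cancel hm]

/-- Lemma A.3 ('Uniform nesting for finitary point coders'). Here the pair
`(g₀, c)` is a generalized `Q'`-coding of `p = g₀ • x`, with path sequence
`g_k = g₀ * α_1 ⋯ α_k = g₀ * pathProd Q'.Lab c k` and terminal vertex sequence
`z_k = Q'.τ (c (k-1))` for `k ≥ 1`, and similarly for `(h₀, d)`. -/
theorem uniform_nesting_for_point_coders
    {G M : Type*} [Group G] [TopologicalSpace M] [T2Space M]
    [MulAction G M] [ContinuousConstSMul G M]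
    (F : Finset G) (Q Q' : FinitaryPointCoder G M) :
    ∃ N : ℕ, ∀ (p x y : M) (g₀ h₀ : G) (c : ℕ → Q'.E) (d : ℕ → Q.E),
      IsStrictCoding Q' c x → g₀ • x = p →
      IsStrictCoding Q d y → h₀ • y = p →
      ∀ m n : ℕ, 1 ≤ m → 1 ≤ n →
        (g₀ * pathProd Q'.Lab c n)⁻¹ * (h₀ * pathProd Q.Lab d m) ∈ F →
        (g₀ * pathProd Q'.Lab c (n + N)) • closure (Q'.W (Q'.τ (c (n + N - 1)))) ⊆
          (h₀ * pathProd Q.Lab d m) • Q.W (Q.τ (d (m - 1))) :=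
  uniform_nesting_for_point_coders_general F Q Q'
end

section
/- Let Γ be a group and (M, d) a compact metric space, and let ρ₀, ρ : Γ → Homeo(M) be two actions of Γ on M by homeomorphisms. Let D > 0 be a pair-separation constant for the action ρ₀. Suppose φ : M → M is a map (not assumed continuous) such that φ(ρ(g)(x)) = ρ₀(g)(φ(x)) for all g ∈ Γ and x ∈ M, and suppose there exists ε > 0 with 5ε ≤ D such that d(x, φ(x)) < ε for every x ∈ M. Then φ is continuous. (Abstract form of Lemma 5.14.) -/
/-!
Let `z` be a cluster value of `φ` at `x`. For each `g`, the map `ρ₀ g ∘ φ = φ ∘ ρ g` lies within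
`ε` of the continuous map `ρ g`, so its cluster value `ρ₀ g z` at `x` lies within `ε` of `ρ g x`,
which is itself within `ε` of `ρ₀ g (φ x)`. Thus `ρ₀ g` never moves `z` and `φ x` more than
`2ε < D` apart, so `z = φ x` by pair separation; by compactness `φ` is then continuous at `x`.
-/

open Filter Topology Metric

theorem MapClusterPt.dist_le_of_eventually_dist_le {α X : Type*} [PseudoMetricSpace X]
    {F : Filter α} {ψ h : α → X} {w c : X} {ε : ℝ} (hw : MapClusterPt w F ψ)
    (hh : Tendsto h F (𝓝 c)) (hψh : ∀ᶠ a in F, dist (ψ a) (h a) ≤ ε) :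
    dist w c ≤ ε := by
  refine le_of_forall_pos_lt_add fun δ hδ => ?_
  have hnear : ∀ᶠ a in F, ψ a ∈ closedBall c (ε + δ / 2) := by
    filter_upwards [hψh, tendsto_nhds.1 hh _ isOpen_ball (mem_ball_self (half_pos hδ))]
      with a hψa hha
    exact (dist_triangle _ _ _).trans (add_le_add hψa (mem_ball.1 hha).le)
  have hwc : dist w c ≤ ε + δ / 2 := isClosed_closedBall.mem_of_mapClusterPt hw hnear
  linarith

theorem phi_continuous_general
    {Γ M : Type*} [Group Γ] [MetricSpace M] [CompactSpace M]
    (ρ₀ ρ : Γ →* Equiv.Perm M)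
    (hρ₀cont : ∀ g : Γ, Continuous (ρ₀ g)) (hρcont : ∀ g : Γ, Continuous (ρ g))
    (D : ℝ)
    (hsep : ∀ x y : M, x ≠ y → ∃ g : Γ, D < dist (ρ₀ g x) (ρ₀ g y))
    (φ : M → M)
    (hequiv : ∀ (g : Γ) (x : M), φ (ρ g x) = ρ₀ g (φ x))
    (ε : ℝ) (hε : 0 < ε) (hεD : 5 * ε ≤ D)
    (hclose : ∀ x : M, dist x (φ x) < ε) :
    Continuous φ := by
  refine continuous_iff_continuousAt.2 fun x => tendsto_nhds_of_unique_mapClusterPt fun z hz => ?_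
  by_contra hne
  obtain ⟨g, hg⟩ := hsep z (φ x) hne
  have hgz : MapClusterPt (ρ₀ g z) (𝓝 x) (φ ∘ ρ g) := by
    rw [show φ ∘ ρ g = ρ₀ g ∘ φ from funext (hequiv g)]
    exact hz.tendsto_comp ((hρ₀cont g).tendsto z)
  have hgz_near : dist (ρ₀ g z) (ρ g x) ≤ ε :=
    hgz.dist_le_of_eventually_dist_le ((hρcont g).tendsto x)
      (Eventually.of_forall fun y => (dist_comm _ _).le.trans (hclose (ρ g y)).le)
  have hgx_near : dist (ρ g x) (ρ₀ g (φ x)) < ε := hequiv g x ▸ hclose (ρ g x)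
  linarith [dist_triangle (ρ₀ g z) (ρ g x) (ρ₀ g (φ x))]

/-- Abstract form of Lemma 5.14: an equivariant map `φ` of a compact metric space
`M` that moves points less than `ε`, with `5ε ≤ D` for a pair-separation constant
`D` of `ρ₀`, is continuous. The actions `ρ₀, ρ` by homeomorphisms are modelled as
homomorphisms into the permutations of `M` each of which acts continuously. -/
theorem phi_continuous
    {Γ M : Type*} [Group Γ] [MetricSpace M] [CompactSpace M]
    (ρ₀ ρ : Γ →* Equiv.Perm M)
    (hρ₀cont : ∀ g : Γ, Continuous (ρ₀ g)) (hρcont : ∀ g : Γ, Continuous (ρ g))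
    (D : ℝ) (hD : 0 < D)
    (hsep : ∀ x y : M, x ≠ y → ∃ g : Γ, D < dist (ρ₀ g x) (ρ₀ g y))
    (φ : M → M)
    (hequiv : ∀ (g : Γ) (x : M), φ (ρ g x) = ρ₀ g (φ x))
    (ε : ℝ) (hε : 0 < ε) (hεD : 5 * ε ≤ D)
    (hclose : ∀ x : M, dist x (φ x) < ε) :
    Continuous φ :=
  phi_continuous_general ρ₀ ρ hρ₀cont hρcont D hsep φ hequiv ε hε hεD hclose
end
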